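/- Let Ω be a finite set and H ≤ Sym(Ω) a permutation group that does not fix every point of Ω, and suppose that the number of prime factors of |H|, counted with multiplicity, is at most b(H). Then b(H) equals the number of prime factors of |H| counted with multiplicity, every point of Ω not fixed by H lies in an H-orbit of prime cardinality, and every point of Ω not fixed by H is contained in some base for H of size b(H). -/
import Mathlib


/-- `B` is a base for the permutation group `H ≤ Sym(Ω)`: its pointwise
stabiliser in `H` is trivial. -/
def IsBase {Ω : Type*} (H : Subgroup (Equiv.Perm Ω)) (B : Set Ω) : Prop :=
  ∀ h ∈ H, (∀ b ∈ B, h b = b) → h = 1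

/-- The base size `b(H)`: the minimum cardinality of a base for `H`. -/
noncomputable def baseSize {Ω : Type*} (H : Subgroup (Equiv.Perm Ω)) : ℕ :=
  sInf {n | ∃ B : Set Ω, IsBase H B ∧ B.ncard = n}

lemma omega_mul {a b : ℕ} (ha : a ≠ 0) (hb : b ≠ 0) :
    (a * b).primeFactorsList.length
      = a.primeFactorsList.length + b.primeFactorsList.length := by
  have := (Nat.perm_primeFactorsList_mul ha hb).length_eq
  simpa using this

lemma omega_pos {m : ℕ} (hm : 2 ≤ m) : 1 ≤ m.primeFactorsList.length := by
  have h : m.primeFactorsList ≠ [] := by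
    simp only [ne_eq, Nat.primeFactorsList_eq_nil]; omega
  exact List.length_pos_iff.mpr h

lemma prime_of_omega_one {m : ℕ} (hm : m ≠ 0) (h : m.primeFactorsList.length = 1) :
    Nat.Prime m := by
  rcases List.length_eq_one_iff.mp h with ⟨p, hp⟩
  have hmem : p ∈ m.primeFactorsList := by simp [hp]
  have := Nat.prod_primeFactorsList hm
  rw [hp] at this
  simp at this
  rw [← this]
  exact Nat.prime_of_mem_primeFactorsList hmem

/-- Orbit–stabilizer decomposition for a subgroup of `Perm Ω`. -/
lemma card_decomp {Ω : Type*} [Finite Ω] (K : Subgroup (Equiv.Perm Ω)) (ω : Ω)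
    (hω : ∃ h ∈ K, h ω ≠ ω) :
    Nat.card K =
      ({β : Ω | ∃ h ∈ K, h ω = β}.ncard) *
        Nat.card (K ⊓ MulAction.stabilizer (Equiv.Perm Ω) ω : Subgroup (Equiv.Perm Ω)) ∧
    2 ≤ ({β : Ω | ∃ h ∈ K, h ω = β}.ncard) := by
  obtain ⟨h, hK, hne⟩ := hω
  have horb : {β : Ω | ∃ h ∈ K, h ω = β} = MulAction.orbit K ω := by
    ext β
    simp only [Set.mem_setOf_eq, MulAction.mem_orbit_iff]
    constructor
    · rintro ⟨g, hg, rfl⟩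
      exact ⟨⟨g, hg⟩, by simp [Subgroup.smul_def, Equiv.Perm.smul_def]⟩
    · rintro ⟨⟨g, hg⟩, rfl⟩
      exact ⟨g, hg, by simp [Subgroup.smul_def, Equiv.Perm.smul_def]⟩
  have hstab : MulAction.stabilizer K ω
      = (K ⊓ MulAction.stabilizer (Equiv.Perm Ω) ω).subgroupOf K := by
    ext ⟨g, hg⟩
    simp [MulAction.mem_stabilizer_iff, Subgroup.mem_subgroupOf, Subgroup.smul_def, hg]
  have hcard1 : Nat.card K
      = Nat.card (K ⧸ MulAction.stabilizer K ω) * Nat.card (MulAction.stabilizer K ω) :=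
    Subgroup.card_eq_card_quotient_mul_card_subgroup _
  have hq : Nat.card (K ⧸ MulAction.stabilizer K ω)
      = {β : Ω | ∃ h ∈ K, h ω = β}.ncard := by
    rw [horb, ← Nat.card_coe_set_eq]
    exact (Nat.card_congr (MulAction.orbitEquivQuotientStabilizer K ω)).symm
  have hs : Nat.card (MulAction.stabilizer K ω)
      = Nat.card (K ⊓ MulAction.stabilizer (Equiv.Perm Ω) ω : Subgroup (Equiv.Perm Ω)) := by
    rw [hstab]
    exact Nat.card_congr (Subgroup.subgroupOfEquivOfLe inf_le_left).toEquiv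
  have hge : 2 ≤ {β : Ω | ∃ h ∈ K, h ω = β}.ncard := by
    have hsub : ({ω, h ω} : Set Ω) ⊆ {β : Ω | ∃ h ∈ K, h ω = β} := by
      rintro β (rfl | rfl)
      · exact ⟨1, one_mem K, rfl⟩
      · exact ⟨h, hK, rfl⟩
    calc 2 = ({ω, h ω} : Set Ω).ncard := (Set.ncard_pair (Ne.symm hne)).symm
      _ ≤ _ := Set.ncard_le_ncard hsub (Set.toFinite _)
  exact ⟨by rw [hcard1, hq, hs], hge⟩

lemma exists_base_le {Ω : Type*} [Finite Ω] :
    ∀ n (K : Subgroup (Equiv.Perm Ω)), Nat.card K ≤ n →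
      ∃ B : Set Ω, IsBase K B ∧ B.ncard ≤ (Nat.card K).primeFactorsList.length := by
  intro n
  induction n with
  | zero => intro K hK; have := Nat.card_pos (α := K); omega
  | succ n ih =>
    intro K hK
    by_cases htriv : ∀ h ∈ K, h = 1
    · exact ⟨∅, fun h hh _ => htriv h hh, by simp⟩
    · push_neg at htriv
      obtain ⟨h, hKmem, hne⟩ := htriv
      have : ∃ ω : Ω, h ω ≠ ω := by
        by_contra hc
        push_neg at hc
        exact hne (Equiv.ext hc)
      obtain ⟨ω, hω⟩ := this
      set K' := K ⊓ MulAction.stabilizer (Equiv.Perm Ω) ω with hK'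
      obtain ⟨hcard, hm⟩ := card_decomp K ω ⟨h, hKmem, hω⟩
      rw [← hK'] at hcard
      have hK'pos : 0 < Nat.card K' := Nat.card_pos
      have hlt : Nat.card K' < Nat.card K := by
        rw [hcard]; nlinarith
      obtain ⟨B', hB', hB'card⟩ := ih K' (by omega)
      refine ⟨insert ω B', ?_, ?_⟩
      · intro g hg hfix
        have hgK' : g ∈ K' := by
          refine ⟨hg, ?_⟩
          exact MulAction.mem_stabilizer_iff.mpr (hfix ω (Set.mem_insert _ _))
        exact hB' g hgK' fun b hb => hfix b (Set.mem_insert_of_mem _ hb)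
      · have homega : (Nat.card K).primeFactorsList.length
            = ({β : Ω | ∃ h ∈ K, h ω = β}.ncard).primeFactorsList.length
              + (Nat.card K').primeFactorsList.length := by
          rw [hcard]; exact omega_mul (by omega) (by omega)
        have h1 := omega_pos hm
        calc (insert ω B').ncard ≤ B'.ncard + 1 := Set.ncard_insert_le _ _
          _ ≤ (Nat.card K').primeFactorsList.length + 1 := by omega
          _ ≤ _ := by omega

theorem statement_14 {Ω : Type*} [Fintype Ω] (H : Subgroup (Equiv.Perm Ω))
    -- `H` does not fix every point of `Ω`
    (hfix : ¬ ∀ ω : Ω, ∀ h ∈ H, h ω = ω)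
    -- the number of prime factors of `|H|`, with multiplicity, is at most `b(H)`
    (hΩ : (Nat.card H).primeFactorsList.length ≤ baseSize H) :
    baseSize H = (Nat.card H).primeFactorsList.length ∧
    ∀ ω : Ω, (∃ h ∈ H, h ω ≠ ω) →
      -- `ω` lies in an `H`-orbit of prime cardinality
      Nat.Prime {β : Ω | ∃ h ∈ H, h ω = β}.ncard ∧
      -- `ω` lies in some base for `H` of size `b(H)`
      ∃ B : Set Ω, IsBase H B ∧ B.ncard = baseSize H ∧ ω ∈ B := by
  -- A helper: for any non-fixed ω, build a base containing ω.
  have key : ∀ ω : Ω, (∃ h ∈ H, h ω ≠ ω) →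
      ∃ B : Set Ω, IsBase H B ∧ ω ∈ B ∧
        B.ncard ≤ (Nat.card H).primeFactorsList.length ∧
        baseSize H ≤ 1 + (Nat.card (H ⊓ MulAction.stabilizer (Equiv.Perm Ω) ω :
          Subgroup (Equiv.Perm Ω))).primeFactorsList.length ∧
        (Nat.card H).primeFactorsList.length =
          ({β : Ω | ∃ h ∈ H, h ω = β}.ncard).primeFactorsList.length
            + (Nat.card (H ⊓ MulAction.stabilizer (Equiv.Perm Ω) ω :
              Subgroup (Equiv.Perm Ω))).primeFactorsList.length ∧
        2 ≤ {β : Ω | ∃ h ∈ H, h ω = β}.ncard := by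
    intro ω hω
    set K' := H ⊓ MulAction.stabilizer (Equiv.Perm Ω) ω with hK'
    obtain ⟨hcard, hm⟩ := card_decomp H ω hω
    rw [← hK'] at hcard
    have hK'pos : 0 < Nat.card K' := Nat.card_pos
    obtain ⟨B', hB', hB'card⟩ := exists_base_le (Nat.card K') K' le_rfl
    have homega : (Nat.card H).primeFactorsList.length
        = ({β : Ω | ∃ h ∈ H, h ω = β}.ncard).primeFactorsList.length
          + (Nat.card K').primeFactorsList.length := by
      rw [hcard]; exact omega_mul (by omega) (by omega)
    have hBase : IsBase H (insert ω B') := by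
      intro g hg hfix'
      have hgK' : g ∈ K' := by
        refine ⟨hg, ?_⟩
        exact MulAction.mem_stabilizer_iff.mpr (hfix' ω (Set.mem_insert _ _))
      exact hB' g hgK' fun b hb => hfix' b (Set.mem_insert_of_mem _ hb)
    have h1 := omega_pos hm
    have hle : (insert ω B').ncard ≤ B'.ncard + 1 := Set.ncard_insert_le _ _
    have hbs : baseSize H ≤ (insert ω B').ncard :=
      csInf_le (OrderBot.bddBelow _) ⟨insert ω B', hBase, rfl⟩
    exact ⟨insert ω B', hBase, Set.mem_insert _ _, by omega, by omega, homega, hm⟩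
  push_neg at hfix
  obtain ⟨ω₀, h₀, hh₀, hne₀⟩ := hfix
  obtain ⟨B₀, hB₀, _, hB₀le, _⟩ := key ω₀ ⟨h₀, hh₀, hne₀⟩
  have hbs₀ : baseSize H ≤ B₀.ncard := csInf_le (OrderBot.bddBelow _) ⟨B₀, hB₀, rfl⟩
  have heq : baseSize H = (Nat.card H).primeFactorsList.length := by omega
  refine ⟨heq, fun ω hω => ?_⟩
  obtain ⟨B, hB, hωB, hBle, hbs_le, homega, hm⟩ := key ω hω
  have hbs : baseSize H ≤ B.ncard := csInf_le (OrderBot.bddBelow _) ⟨B, hB, rfl⟩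
  have h1 := omega_pos hm
  refine ⟨?_, B, hB, by omega, hωB⟩
  exact prime_of_omega_one (by omega) (by omega)
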